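/- arXiv:1101.2116 — 2 statements merged into one kernel-verified Lean document; each statement's English description precedes it below -/
import Mathlib

section
/- Let (K,ν) be a real closed valued field, L = K(x₁,…,xₙ), and let p₁,…,p_m ∈ K[x₁,…,xₙ] be polynomials with S_p̄ nonempty. Then every element of the O_ν-subalgebra A_p̄ of L generated by I_p̄ = {1/(1+f) : f ∈ Cone({p₁,…,p_m})} is OVF-integral on S_p̄. -/
universe u v w

open MvPolynomial

/-- A (linear) field ordering, given by its cone of non-negative elements.
This is equivalent to a linear order making the field an ordered field. -/
structure FieldOrdering (L : Type*) [Field L] where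
  P : Set L
  add_mem : ∀ x ∈ P, ∀ y ∈ P, x + y ∈ P
  mul_mem : ∀ x ∈ P, ∀ y ∈ P, x * y ∈ P
  square_mem : ∀ x : L, x * x ∈ P
  neg_one_not_mem : (-1 : L) ∉ P
  total : ∀ x : L, x ∈ P ∨ -x ∈ P

/-- `x >_L 0` for a field ordering. -/
def FieldOrdering.Pos {L : Type*} [Field L] (O : FieldOrdering L) (x : L) : Prop :=
  x ∈ O.P ∧ x ≠ 0

/-- An ordering on a valued field is compatible with the (multiplicative) valuation
if `0 < x < y` implies `w x ≤ w y` (i.e. the additive valuation of `x` is at least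
that of `y`); equivalently, the valuation ring is convex. -/
def FieldOrdering.IsCompatible {L : Type*} [Field L] {Γ : Type*}
    [LinearOrderedCommGroupWithZero Γ] (O : FieldOrdering L) (w : Valuation L Γ) : Prop :=
  ∀ x y : L, O.Pos x → O.Pos (y - x) → w x ≤ w y

/-- A field `K` is real closed: every nonnegative element is a square and every
polynomial of odd degree has a root. -/
def IsRealClosedField (K : Type*) [Field K] [LinearOrder K] [IsStrictOrderedRing K] : Prop :=
  (∀ x : K, 0 ≤ x → ∃ y : K, y * y = x) ∧
    ∀ p : Polynomial K, Odd p.natDegree → ∃ x : K, p.IsRoot x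

/-- `(K, ≤, ν)` is a real closed valued field: `K` is real closed and the
valuation ring of `ν` is convex (`0 < x < y → ν x ≤ ν y` multiplicatively). -/
def IsRCVF {K : Type*} [Field K] [LinearOrder K] [IsStrictOrderedRing K] {Γ₀ : Type*}
    [LinearOrderedCommGroupWithZero Γ₀] (ν : Valuation K Γ₀) : Prop :=
  IsRealClosedField K ∧ ∀ x y : K, 0 < x → x < y → ν x ≤ ν y

/-- The field of rational functions in `n` variables over `K`. -/
abbrev RatFuncField (K : Type u) [Field K] (n : ℕ) : Type u :=
  FractionRing (MvPolynomial (Fin n) K)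

/-- `f = q/r` with `r b ≠ 0` and `v = q b / r b`; i.e. `f` is defined at `b` with value `v`. -/
def HasEvalAt {K : Type u} [Field K] {n : ℕ} (f : RatFuncField K n) (b : Fin n → K) (v : K) :
    Prop :=
  ∃ q r : MvPolynomial (Fin n) K, eval b r ≠ 0 ∧
    f = algebraMap (MvPolynomial (Fin n) K) (RatFuncField K n) q /
      algebraMap (MvPolynomial (Fin n) K) (RatFuncField K n) r ∧
    v = eval b q / eval b r

/-- `f` is defined at `b`. -/
def IsDefinedAt {K : Type u} [Field K] {n : ℕ} (f : RatFuncField K n) (b : Fin n → K) : Prop :=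
  ∃ v : K, HasEvalAt f b v

/-- A valuation `w` on an extension field extends `ν` if the valuation ring of `w`
intersected with `K` is the valuation ring of `ν`. -/
def ValExtends {K L : Type*} [Field K] [Field L] [Algebra K L] {Γ₀ Γ : Type*}
    [LinearOrderedCommGroupWithZero Γ₀] [LinearOrderedCommGroupWithZero Γ]
    (ν : Valuation K Γ₀) (w : Valuation L Γ) : Prop :=
  ∀ a : K, w (algebraMap K L a) ≤ 1 ↔ ν a ≤ 1

/-- An OVF-valuation on `L` (over `(K,ν)`): a valuation extending `ν` admitting a
compatible field ordering. -/
def IsOVFValuation {K L : Type*} [Field K] [Field L] [Algebra K L] {Γ₀ Γ : Type*}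
    [LinearOrderedCommGroupWithZero Γ₀] [LinearOrderedCommGroupWithZero Γ]
    (ν : Valuation K Γ₀) (w : Valuation L Γ) : Prop :=
  ValExtends ν w ∧ ∃ O : FieldOrdering L, O.IsCompatible w

/-- A valuation on `K(x₁,…,xₙ)` is near `b ∈ Kⁿ` if every rational function defined
at `b` and vanishing at `b` has valuation above every element of the value group of `K`
(multiplicatively: `w f < w a` for every nonzero `a ∈ K`). -/
def IsNear {K : Type u} [Field K] {n : ℕ} {Γ : Type*} [LinearOrderedCommGroupWithZero Γ]
    (w : Valuation (RatFuncField K n) Γ) (b : Fin n → K) : Prop :=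
  ∀ f : RatFuncField K n, HasEvalAt f b 0 →
    ∀ a : K, a ≠ 0 → w f < w (algebraMap K (RatFuncField K n) a)

/-- `f` is OVF-integral at `b`: every OVF-valuation near `b` takes `f` into its
valuation ring. -/
def IsOVFIntegralAt {K : Type u} [Field K] {Γ₀ : Type v} [LinearOrderedCommGroupWithZero Γ₀]
    {n : ℕ} (ν : Valuation K Γ₀) (f : RatFuncField K n) (b : Fin n → K) : Prop :=
  ∀ (Γ : Type w) (_ : LinearOrderedCommGroupWithZero Γ)
    (wb : Valuation (RatFuncField K n) Γ),
    IsOVFValuation ν wb → IsNear wb b → wb f ≤ 1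

/-- `Cone P`: the smallest subset of `L` containing `P` and all squares of nonzero
elements which is closed under addition and multiplication. -/
inductive InCone {L : Type*} [Field L] (P : Set L) : L → Prop
  | mem : ∀ x ∈ P, InCone P x
  | sq : ∀ x : L, x ≠ 0 → InCone P (x * x)
  | add : ∀ x y : L, InCone P x → InCone P y → InCone P (x + y)
  | mul : ∀ x y : L, InCone P x → InCone P y → InCone P (x * y)

/-- The open semi-algebraic set `S_p̄ = {b | p_i(b) > 0 for all i}`. -/
def SetSP {K : Type u} [Field K] [LinearOrder K] [IsStrictOrderedRing K] {n m : ℕ}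
    (p : Fin m → MvPolynomial (Fin n) K) : Set (Fin n → K) :=
  {b | ∀ i, 0 < eval b (p i)}

/-- The set `I_p̄ = { 1/(1+f) : f ∈ Cone({p₁,…,p_m}) }` inside `K(x₁,…,xₙ)`. -/
def SetIP {K : Type u} [Field K] {n m : ℕ} (p : Fin m → MvPolynomial (Fin n) K) :
    Set (RatFuncField K n) :=
  {g | ∃ f : RatFuncField K n,
    InCone (Set.range fun i => algebraMap (MvPolynomial (Fin n) K) (RatFuncField K n) (p i)) f ∧
    g = (1 + f)⁻¹}

/-- The `O_ν`-subalgebra of `K(x₁,…,xₙ)` generated by a set `I` (as a subring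
generated by `I` together with the image of `O_ν`). -/
noncomputable def OAlgebraGen {K : Type u} [Field K] {Γ₀ : Type v} [LinearOrderedCommGroupWithZero Γ₀]
    (ν : Valuation K Γ₀) {n : ℕ} (I : Set (RatFuncField K n)) : Subring (RatFuncField K n) :=
  Subring.closure ((algebraMap K (RatFuncField K n) '' {a : K | ν a ≤ 1}) ∪ I)



/-- The multiplicative set `T = {1 + m·a : m ∈ M_ν, a ∈ A}` used for the integral radical. -/
def SetT {K : Type u} [Field K] {Γ₀ : Type v} [LinearOrderedCommGroupWithZero Γ₀]
    (ν : Valuation K Γ₀) {n : ℕ} (A : Subring (RatFuncField K n)) :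
    Set (RatFuncField K n) :=
  {t | ∃ m : K, ν m < 1 ∧ ∃ a ∈ A, t = 1 + algebraMap K (RatFuncField K n) m * a}

/-- The localization `A_T` of `A` at `T`, realized inside `L` as the subring generated
by `A` together with the inverses of the elements of `T`. -/
noncomputable def LocAT {K : Type u} [Field K] {n : ℕ}
    (A : Subring (RatFuncField K n)) (T : Set (RatFuncField K n)) :
    Subring (RatFuncField K n) :=
  Subring.closure ((A : Set (RatFuncField K n)) ∪ ((fun t => t⁻¹) '' T))

/-- The integral radical of `A`: the integral closure in `L` of the localization `A_T`. -/
noncomputable def IntegralRadical {K : Type u} [Field K] {Γ₀ : Type v}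
    [LinearOrderedCommGroupWithZero Γ₀] (ν : Valuation K Γ₀) {n : ℕ}
    (A : Subring (RatFuncField K n)) : Set (RatFuncField K n) :=
  (integralClosure (LocAT A (SetT ν A)) (RatFuncField K n) :
    Subalgebra (LocAT A (SetT ν A)) (RatFuncField K n))

/-- A semi-section of a valued field `(L, μ)` (with `μ` surjective, so that the nonzero
elements of `Γ` form the value group): a map `s : Γ → L` with `μ (s γ) = γ` such that
`s (γ₁γ₂) / (s γ₁ · s γ₂)` is always a square. -/
def IsSemiSection {L : Type*} [Field L] {Γ : Type*} [LinearOrderedCommGroupWithZero Γ]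
    (μ : Valuation L Γ) (s : Γ → L) : Prop :=
  (∀ γ : Γ, γ ≠ 0 → μ (s γ) = γ) ∧
    ∀ γ₁ γ₂ : Γ, γ₁ ≠ 0 → γ₂ ≠ 0 →
      ∃ c : L, c ≠ 0 ∧ s (γ₁ * γ₂) = s γ₁ * s γ₂ * (c * c)

/-- `y ∈ O_μ` and its residue is `>_ℓ 0` for the given ordering of the residue field. -/
def ResPos {L : Type*} [Field L] {Γ : Type*} [LinearOrderedCommGroupWithZero Γ]
    (μ : Valuation L Γ)
    (Oℓ : FieldOrdering (IsLocalRing.ResidueField μ.valuationSubring)) (y : L) : Prop :=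
  ∃ u : μ.valuationSubring, (u : L) = y ∧
    Oℓ.Pos (IsLocalRing.residue (μ.valuationSubring) u)

/-- An ordering `OL` of `L` induces the ordering `Oℓ` of the residue field:
positive units of the valuation ring have positive residue. -/
def OrderingInduces {L : Type*} [Field L] {Γ : Type*} [LinearOrderedCommGroupWithZero Γ]
    (μ : Valuation L Γ) (OL : FieldOrdering L)
    (Oℓ : FieldOrdering (IsLocalRing.ResidueField μ.valuationSubring)) : Prop :=
  ∀ u : μ.valuationSubring, μ (u : L) = 1 → OL.Pos (u : L) →
    Oℓ.Pos (IsLocalRing.residue (μ.valuationSubring) u)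

/-- The set `S_{p̄,ḡ}`: points where all `p_i` are positive and all `g_j` are defined
with value in the valuation ring. -/
def SetSPG {K : Type u} [Field K] [LinearOrder K] [IsStrictOrderedRing K] {Γ₀ : Type v}
    [LinearOrderedCommGroupWithZero Γ₀] (ν : Valuation K Γ₀) {n m l : ℕ}
    (p : Fin m → MvPolynomial (Fin n) K) (g : Fin l → RatFuncField K n) :
    Set (Fin n → K) :=
  {b | (∀ i, 0 < eval b (p i)) ∧ ∀ j, ∃ v : K, HasEvalAt (g j) b v ∧ ν v ≤ 1}

/-
A positive value `p i (b) > 0` is a square in the real closed field `K`, so its image in `L` is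
positive for every field ordering. An OVF-valuation near `b` makes `p i - p i (b)` infinitesimal
compared with `p i (b)`, and convexity of the valuation ring then forces `p i` itself to be
positive. Hence the whole cone is positive, so `1 + f ≥ 1` has valuation at least `1` and its
inverse lies in the valuation ring, as do the elements of `O_ν`; the generated subring follows.
-/

namespace FieldOrdering

variable {L : Type*} [Field L] (O : FieldOrdering L)

lemma pos_one : O.Pos 1 :=
  ⟨by simpa using O.square_mem 1, one_ne_zero⟩

lemma pos_of_isSquare {x : L} (hx : IsSquare x) (h0 : x ≠ 0) : O.Pos x := by
  obtain ⟨y, rfl⟩ := hx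
  exact ⟨O.square_mem y, h0⟩

lemma eq_zero_of_mem_of_neg_mem {x : L} (hx : x ∈ O.P) (hx' : -x ∈ O.P) : x = 0 := by
  by_contra h0
  have hmem : (-x) * (x * (x⁻¹ * x⁻¹)) ∈ O.P :=
    O.mul_mem _ hx' _ (O.mul_mem _ hx _ (O.square_mem x⁻¹))
  have heq : (-x) * (x * (x⁻¹ * x⁻¹)) = -1 := by field_simp
  exact O.neg_one_not_mem (heq ▸ hmem)

variable {O}

lemma Pos.add {x y : L} (hx : O.Pos x) (hy : O.Pos y) : O.Pos (x + y) := by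
  refine ⟨O.add_mem _ hx.1 _ hy.1, fun h => hx.2 ?_⟩
  refine O.eq_zero_of_mem_of_neg_mem hx.1 ?_
  rw [← eq_neg_of_add_eq_zero_right h]
  exact hy.1

lemma Pos.mul {x y : L} (hx : O.Pos x) (hy : O.Pos y) : O.Pos (x * y) :=
  ⟨O.mul_mem _ hx.1 _ hy.1, mul_ne_zero hx.2 hy.2⟩

variable {Γ : Type*} [LinearOrderedCommGroupWithZero Γ] {w : Valuation L Γ}

lemma IsCompatible.pos_of_valuation_sub_lt (hO : O.IsCompatible w) {a u : L} (ha : O.Pos a)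
    (hua : w (u - a) < w a) : O.Pos u := by
  have hu0 : u ≠ 0 := by
    rintro rfl
    simp at hua
  refine ⟨(O.total u).resolve_right fun hneg => ?_, hu0⟩
  have hle : w a ≤ w (a - u) := hO a (a - u) ha (by simpa using ⟨hneg, neg_ne_zero.2 hu0⟩)
  rw [← neg_sub, Valuation.map_neg] at hle
  exact hua.not_ge hle

lemma IsCompatible.valuation_inv_one_add_le_one (hO : O.IsCompatible w) {f : L} (hf : O.Pos f) :
    w (1 + f)⁻¹ ≤ 1 := by
  have h1 : 1 ≤ w (1 + f) := by simpa using hO 1 (1 + f) O.pos_one (by simpa using hf)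
  rw [map_inv₀]
  exact inv_le_one_of_one_le₀ h1

end FieldOrdering

lemma InCone.pos {L : Type*} [Field L] {O : FieldOrdering L} {P : Set L}
    (hP : ∀ x ∈ P, O.Pos x) {f : L} (hf : InCone P f) : O.Pos f := by
  induction hf with
  | mem x hx => exact hP x hx
  | sq x hx => exact O.pos_of_isSquare ⟨x, rfl⟩ (mul_ne_zero hx hx)
  | add x y _ _ hx hy => exact hx.add hy
  | mul x y _ _ hx hy => exact hx.mul hy

lemma IsNear.valuation_sub_lt {K : Type u} [Field K] {n : ℕ} {Γ : Type*}
    [LinearOrderedCommGroupWithZero Γ] {w : Valuation (RatFuncField K n) Γ} {b : Fin n → K}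
    (hw : IsNear w b) (q : MvPolynomial (Fin n) K) (hq : eval b q ≠ 0) :
    w (algebraMap _ (RatFuncField K n) q - algebraMap K _ (eval b q)) <
      w (algebraMap K (RatFuncField K n) (eval b q)) := by
  refine hw _ ⟨q - C (eval b q), 1, by simp, ?_, by simp⟩ _ hq
  rw [map_one, div_one, map_sub, ← algebraMap_eq, ← IsScalarTower.algebraMap_apply]

lemma IsNear.pos_algebraMap_of_eval_pos {K : Type u} [Field K] [LinearOrder K]
    [IsStrictOrderedRing K] (hK : IsRealClosedField K) {n : ℕ} {Γ : Type*}
    [LinearOrderedCommGroupWithZero Γ] {w : Valuation (RatFuncField K n) Γ} {b : Fin n → K}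
    (hw : IsNear w b) {O : FieldOrdering (RatFuncField K n)} (hO : O.IsCompatible w)
    {q : MvPolynomial (Fin n) K} (hq : 0 < eval b q) :
    O.Pos (algebraMap (MvPolynomial (Fin n) K) (RatFuncField K n) q) := by
  obtain ⟨y, hy⟩ := hK.1 _ hq.le
  have hpos : O.Pos (algebraMap K (RatFuncField K n) (eval b q)) :=
    O.pos_of_isSquare ⟨algebraMap K _ y, by rw [← map_mul, hy]⟩
      ((map_ne_zero _).2 hq.ne')
  exact hO.pos_of_valuation_sub_lt hpos (hw.valuation_sub_lt q hq.ne')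

theorem algebra_gen_ovf_integral_general {K : Type u} [Field K] [LinearOrder K] [IsStrictOrderedRing K] {Γ₀ : Type v}
    [LinearOrderedCommGroupWithZero Γ₀] (ν : Valuation K Γ₀) (hK : IsRCVF ν)
    {n m : ℕ} (p : Fin m → MvPolynomial (Fin n) K) :
    ∀ h ∈ OAlgebraGen ν (SetIP p), ∀ b ∈ SetSP p, IsOVFIntegralAt ν h b := by
  intro h hh b hb Γ _ w ⟨hext, O, hO⟩ hnear
  have hcone : ∀ f, InCone (Set.range fun i => algebraMap _ (RatFuncField K n) (p i)) f →
      O.Pos f := fun f hf =>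
    hf.pos (by rintro _ ⟨i, rfl⟩; exact hnear.pos_algebraMap_of_eval_pos hK.1 hO (hb i))
  have hgen : OAlgebraGen ν (SetIP p) ≤ w.valuationSubring.toSubring := by
    rw [OAlgebraGen, Subring.closure_le]
    rintro _ (⟨a, ha, rfl⟩ | ⟨f, hf, rfl⟩)
    · exact (hext a).2 ha
    · exact hO.valuation_inv_one_add_le_one (hcone f hf)
  exact hgen hh

/-- Every element of the `O_ν`-algebra `A_p̄` generated by `I_p̄` is
OVF-integral on `S_p̄`. -/
theorem algebra_gen_ovf_integral {K : Type u} [Field K] [LinearOrder K] [IsStrictOrderedRing K] {Γ₀ : Type v}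
    [LinearOrderedCommGroupWithZero Γ₀] (ν : Valuation K Γ₀) (hK : IsRCVF ν)
    {n m : ℕ} (p : Fin m → MvPolynomial (Fin n) K) (hS : (SetSP p).Nonempty) :
    ∀ h ∈ OAlgebraGen ν (SetIP p), ∀ b ∈ SetSP p, IsOVFIntegralAt ν h b :=
  algebra_gen_ovf_integral_general ν hK p
end

section
/- Let (K,ν) be a real closed valued field, L = K(x₁,…,xₙ), p₁,…,p_m ∈ K[x₁,…,xₙ] with S_p̄ nonempty, and let A_p̄ be the O_ν-subalgebra of L generated by I_p̄ = {1/(1+f) : f ∈ Cone({p₁,…,p_m})}. Let ν̃ be a valuation on L extending ν such that A_p̄ ⊆ O_ν̃, let ℓ be the residue field of (L,ν̃), and let C = {res(q/c²) : q belongs to the multiplicative semigroup generated by p₁,…,p_m, c ∈ L, ν̃(q) = ν̃(c²)} ⊆ ℓ. Then there exists a linear order on ℓ making ℓ an ordered field in which every element of C is nonnegative. -/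
universe u v w

open MvPolynomial

/-!
Every element of `Cone(p̄)` is `N / D²` with `N ≥ 0` on `S_p̄`; as `S_p̄` is a nonempty open
set, `D` does not vanish on all of it, so `-1 ∉ Cone(p̄)`. If no ordering of `ℓ` made `C`
nonnegative, then (Artin–Schreier) `-1` would lie in the preordering generated by `C`, and lifting
through the residue map would give `u ∈ Cone(p̄) ∩ O_ν̃` with `res u = -1`. Then `1 + u ≠ 0` lies in
the maximal ideal of `O_ν̃`, while `(1 + u)⁻¹ ∈ I_p̄ ⊆ A_p̄ ⊆ O_ν̃`, which is impossible.
-/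

open Topology

theorem MvPolynomial.exists_eval_ne_zero_of_mem_nhds {σ R : Type*} [CommRing R] [IsDomain R]
    [TopologicalSpace R] [T1Space R] [∀ x : R, (𝓝[≠] x).NeBot] {q : MvPolynomial σ R}
    (hq : q ≠ 0) {U : Set (σ → R)} {b : σ → R} (hU : U ∈ 𝓝 b) :
    ∃ x ∈ U, eval x q ≠ 0 := by
  rw [nhds_pi, Filter.mem_pi] at hU
  obtain ⟨I, -, t, ht, htU⟩ := hU
  by_contra! h
  refine hq (funext_set t (fun i => infinite_of_mem_nhds (b i) (ht i)) fun x hx => ?_)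
  simpa using h x (htU fun i _ => hx i trivial)

theorem isOpen_setSP {K : Type u} [Field K] [LinearOrder K] [IsStrictOrderedRing K]
    [TopologicalSpace K] [OrderTopology K] {n m : ℕ} (p : Fin m → MvPolynomial (Fin n) K) :
    IsOpen (SetSP p) := by
  simp only [SetSP, Set.ofPred_forall]
  exact isOpen_iInter_of_finite fun i => isOpen_lt continuous_const (continuous_eval (p i))

theorem InCone.exists_eq_div_sq {σ K : Type*} [Field K] [LinearOrder K] [IsStrictOrderedRing K]
    {ι : Type*} {p : ι → MvPolynomial σ K} {S : Set (σ → K)}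
    (hp : ∀ i, ∀ b ∈ S, 0 ≤ eval b (p i)) {f : FractionRing (MvPolynomial σ K)}
    (hf : InCone (Set.range fun i => algebraMap (MvPolynomial σ K) _ (p i)) f) :
    ∃ N D : MvPolynomial σ K, D ≠ 0 ∧
      f = algebraMap _ _ N / algebraMap (MvPolynomial σ K) (FractionRing _) D ^ 2 ∧
      ∀ b ∈ S, 0 ≤ eval b N := by
  have hD : ∀ {D : MvPolynomial σ K}, D ≠ 0 →
      algebraMap (MvPolynomial σ K) (FractionRing (MvPolynomial σ K)) D ^ 2 ≠ 0 :=
    fun hD => pow_ne_zero 2 ((map_ne_zero_iff _ (IsFractionRing.injective _ _)).mpr hD)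
  induction hf with
  | mem x hx =>
    obtain ⟨i, rfl⟩ := hx
    exact ⟨p i, 1, one_ne_zero, by simp, hp i⟩
  | sq x hx =>
    obtain ⟨a, d, hd, rfl⟩ := IsFractionRing.div_surjective (A := MvPolynomial σ K) x
    refine ⟨a * a, d, nonZeroDivisors.ne_zero hd, by rw [map_mul, div_mul_div_comm, pow_two],
      fun b _ => by simp [mul_self_nonneg]⟩
  | add x y _ _ ihx ihy =>
    obtain ⟨N₁, D₁, hD₁, rfl, hN₁⟩ := ihx
    obtain ⟨N₂, D₂, hD₂, rfl, hN₂⟩ := ihy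
    refine ⟨N₁ * D₂ ^ 2 + N₂ * D₁ ^ 2, D₁ * D₂, mul_ne_zero hD₁ hD₂, ?_, fun b hb => ?_⟩
    · rw [div_add_div _ _ (hD hD₁) (hD hD₂)]
      simp only [map_add, map_mul, map_pow]
      ring
    · have := hN₁ b hb
      have := hN₂ b hb
      simp only [map_add, map_mul, map_pow]
      positivity
  | mul x y _ _ ihx ihy =>
    obtain ⟨N₁, D₁, hD₁, rfl, hN₁⟩ := ihx
    obtain ⟨N₂, D₂, hD₂, rfl, hN₂⟩ := ihy
    refine ⟨N₁ * N₂, D₁ * D₂, mul_ne_zero hD₁ hD₂, ?_, fun b hb => ?_⟩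
    · rw [div_mul_div_comm, map_mul, map_mul, mul_pow]
    · simpa only [map_mul] using mul_nonneg (hN₁ b hb) (hN₂ b hb)

theorem neg_one_not_inCone {K : Type u} [Field K] [LinearOrder K] [IsStrictOrderedRing K]
    {n m : ℕ} {p : Fin m → MvPolynomial (Fin n) K} (hS : (SetSP p).Nonempty) :
    ¬ InCone (Set.range fun i => algebraMap (MvPolynomial (Fin n) K) (RatFuncField K n) (p i))
      (-1) := by
  intro h
  obtain ⟨N, D, hD, hND, hN⟩ := InCone.exists_eq_div_sq (S := SetSP p) (fun i b hb => (hb i).le) h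
  have hN_eq : N = -D ^ 2 := by
    apply IsFractionRing.injective (MvPolynomial (Fin n) K) (RatFuncField K n)
    have : algebraMap (MvPolynomial (Fin n) K) (RatFuncField K n) D ^ 2 ≠ 0 :=
      pow_ne_zero 2 ((map_ne_zero_iff _ (IsFractionRing.injective _ _)).mpr hD)
    rw [eq_div_iff this] at hND
    simp only [map_neg, map_pow, ← hND]
    ring
  let := Preorder.topology K
  have : OrderTopology K := ⟨rfl⟩
  obtain ⟨b, hb⟩ := hS
  obtain ⟨c, hc, hDc⟩ :=
    MvPolynomial.exists_eval_ne_zero_of_mem_nhds hD ((isOpen_setSP p).mem_nhds hb)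
  have := hN c hc
  rw [hN_eq, map_neg, map_pow] at this
  exact hDc (pow_eq_zero_iff two_ne_zero |>.mp (le_antisymm (by linarith) (sq_nonneg _)))

namespace RingPreordering

theorem exists_le_isMax {R : Type*} [CommRing R] (P : RingPreordering R) :
    ∃ M : RingPreordering R, P ≤ M ∧ IsMax M := by
  refine zorn_le_nonempty_Ici₀ P (fun c _ hc Q hQ => ?_) P le_rfl
  have directed : ∀ {x y}, x ∈ ⋃ Q ∈ c, (Q : Set R) → y ∈ ⋃ Q ∈ c, (Q : Set R) →
      ∃ Q ∈ c, x ∈ Q ∧ y ∈ Q := by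
    simp only [Set.mem_iUnion₂, SetLike.mem_coe]
    rintro x y ⟨Q₁, hQ₁, hx⟩ ⟨Q₂, hQ₂, hy⟩
    rcases hc.total hQ₁ hQ₂ with h | h
    exacts [⟨Q₂, hQ₂, h hx, hy⟩, ⟨Q₁, hQ₁, hx, h hy⟩]
  refine ⟨mk' (⋃ Q ∈ c, (Q : Set R)) (fun hx hy => ?_) (fun hx hy => ?_)
    (fun x => Set.mem_biUnion hQ (Q.mul_self_mem x)) ?_, fun Q hQ x hx => Set.mem_biUnion hQ hx⟩
  · obtain ⟨Q, hQ, hx, hy⟩ := directed hx hy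
    exact Set.mem_biUnion hQ (add_mem hx hy)
  · obtain ⟨Q, hQ, hx, hy⟩ := directed hx hy
    exact Set.mem_biUnion hQ (mul_mem hx hy)
  · simp only [Set.mem_iUnion₂, SetLike.mem_coe, not_exists]
    exact fun Q _ => Q.neg_one_notMem

theorem mem_or_neg_mem_of_isMax {F : Type*} [Field F] {M : RingPreordering F} (hM : IsMax M)
    (a : F) : a ∈ M ∨ -a ∈ M := by
  by_cases h : ∃ x ∈ M, ∃ y ∈ M, -1 = x + y * a
  · right
    obtain ⟨x, hx, y, hy, hxy⟩ := h
    have hy0 : y ≠ 0 := by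
      rintro rfl
      exact M.neg_one_notMem (by simpa [hxy] using hx)
    have : -a = (1 + x) * y * (y⁻¹ * y⁻¹) := by
      field_simp
      linear_combination hxy
    rw [this]
    exact mul_mem (mul_mem (add_mem (one_mem M) hx) hy) (M.mul_self_mem _)
  · left
    push Not at h
    let Ma : RingPreordering F := mk' {z | ∃ x ∈ M, ∃ y ∈ M, z = x + y * a}
      (by
        rintro _ _ ⟨x, hx, y, hy, rfl⟩ ⟨x', hx', y', hy', rfl⟩
        exact ⟨x + x', add_mem hx hx', y + y', add_mem hy hy', by ring⟩)
      (by
        rintro _ _ ⟨x, hx, y, hy, rfl⟩ ⟨x', hx', y', hy', rfl⟩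
        refine ⟨x * x' + y * y' * (a * a), ?_, x * y' + x' * y, ?_, by ring⟩
        · exact add_mem (mul_mem hx hx') (mul_mem (mul_mem hy hy') (M.mul_self_mem a))
        · exact add_mem (mul_mem hx hy') (mul_mem hx' hy))
      (fun z => ⟨z * z, M.mul_self_mem z, 0, zero_mem M, by ring⟩)
      (fun ⟨x, hx, y, hy, hxy⟩ => h x hx y hy hxy)
    have hle : M ≤ Ma := fun x hx => ⟨x, hx, 0, zero_mem M, by ring⟩
    exact hM hle ⟨0, zero_mem M, 1, one_mem M, by ring⟩

end RingPreordering

def FieldOrdering.ofIsMax {F : Type*} [Field F] {M : RingPreordering F} (hM : IsMax M) :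
    FieldOrdering F where
  P := M
  add_mem _ hx _ hy := AddMemClass.add_mem hx hy
  mul_mem _ hx _ hy := MulMemClass.mul_mem hx hy
  square_mem := M.mul_self_mem
  neg_one_not_mem := M.neg_one_notMem
  total := RingPreordering.mem_or_neg_mem_of_isMax hM

theorem FieldOrdering.exists_subset_of_neg_one_notMem_closure {F : Type*} [Field F] {C : Set F}
    (hC : -1 ∉ Subsemiring.closure (C ∪ Set.range fun x => x * x)) :
    ∃ O : FieldOrdering F, C ⊆ O.P := by
  let P : RingPreordering F :=
    ⟨Subsemiring.closure (C ∪ Set.range fun x => x * x), by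
      rintro _ ⟨x, rfl⟩
      exact Subsemiring.subset_closure (Or.inr ⟨x, rfl⟩), hC⟩
  obtain ⟨M, hPM, hM⟩ := P.exists_le_isMax
  exact ⟨FieldOrdering.ofIsMax hM, fun x hx => hPM (Subsemiring.subset_closure (Or.inl hx))⟩

namespace InCone

variable {L : Type*} [Field L] {P : Set L}

def subsemiring (P : Set L) : Subsemiring L where
  carrier := {f | f = 0 ∨ InCone P f}
  zero_mem' := Or.inl rfl
  one_mem' := Or.inr (by simpa using sq (P := P) 1 one_ne_zero)
  add_mem' := by
    rintro x y (rfl | hx) (rfl | hy)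
    exacts [Or.inl (add_zero 0), Or.inr (by simpa using hy), Or.inr (by simpa using hx),
      Or.inr (add x y hx hy)]
  mul_mem' := by
    rintro x y (rfl | hx) (rfl | hy)
    exacts [Or.inl (zero_mul 0), Or.inl (zero_mul y), Or.inl (mul_zero x), Or.inr (mul x y hx hy)]

theorem mul_self_mem_subsemiring (x : L) : x * x ∈ subsemiring P := by
  rcases eq_or_ne x 0 with rfl | hx
  exacts [Or.inl (mul_zero 0), Or.inr (sq x hx)]

theorem div_mul_self_mem_subsemiring {q : L} (hq : q ∈ subsemiring P) (c : L) :
    q / (c * c) ∈ subsemiring P := by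
  rw [div_eq_mul_inv, mul_inv]
  exact mul_mem hq (mul_self_mem_subsemiring c⁻¹)

theorem subsemigroupClosure_subset_subsemiring : (Subsemigroup.closure P : Set L) ⊆ subsemiring P :=
  fun _ hq => Or.inr (Subsemigroup.closure_induction (fun x hx => mem x hx)
    (fun x y _ _ hx hy => mul x y hx hy) hq)

end InCone

namespace ValuationSubring

variable {L : Type*} [Field L] (A : ValuationSubring L)

theorem closure_le_map_residue {S : Subsemiring L} (hS : ∀ x : L, x * x ∈ S)
    {C : Set (IsLocalRing.ResidueField A)}
    (hC : ∀ x ∈ C, ∃ u : A, (u : L) ∈ S ∧ IsLocalRing.residue A u = x) :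
    Subsemiring.closure (C ∪ Set.range fun x => x * x) ≤
      (S.comap A.subtype).map (IsLocalRing.residue A) := by
  refine Subsemiring.closure_le.mpr (Set.union_subset hC ?_)
  rintro _ ⟨x, rfl⟩
  obtain ⟨u, rfl⟩ := IsLocalRing.residue_surjective x
  exact ⟨u * u, hS u, map_mul _ u u⟩

theorem residue_ne_zero_of_inv_mem {u : A} (hu : (u : L) ≠ 0) (hinv : (u : L)⁻¹ ∈ A) :
    IsLocalRing.residue A u ≠ 0 := by
  rw [Ne, IsLocalRing.residue_eq_zero_iff, ← coe_mem_nonunits_iff, mem_nonunits_iff_or]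
  tauto

end ValuationSubring

theorem exists_residue_ordering_general {K : Type u} [Field K] [LinearOrder K] [IsStrictOrderedRing K] {Γ₀ : Type v}
    [LinearOrderedCommGroupWithZero Γ₀] (ν : Valuation K Γ₀)
    {n m : ℕ} (p : Fin m → MvPolynomial (Fin n) K) (hS : (SetSP p).Nonempty)
    {Γ : Type w} [LinearOrderedCommGroupWithZero Γ]
    (wt : Valuation (RatFuncField K n) Γ)
    (hA : ∀ x ∈ OAlgebraGen ν (SetIP p), wt x ≤ 1) :
    ∃ Oℓ : FieldOrdering (IsLocalRing.ResidueField wt.valuationSubring),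
      ∀ x : IsLocalRing.ResidueField wt.valuationSubring,
        (∃ q c : RatFuncField K n,
          q ∈ Subsemigroup.closure
            (Set.range fun i =>
              algebraMap (MvPolynomial (Fin n) K) (RatFuncField K n) (p i)) ∧
          wt q = wt (c * c) ∧
          ∃ u : wt.valuationSubring, (u : RatFuncField K n) = q / (c * c) ∧
            IsLocalRing.residue wt.valuationSubring u = x) →
        x ∈ Oℓ.P := by
  set Sr := Set.range fun i => algebraMap (MvPolynomial (Fin n) K) (RatFuncField K n) (p i)
  refine FieldOrdering.exists_subset_of_neg_one_notMem_closure fun hC => ?_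
  obtain ⟨u, hu, hres⟩ := wt.valuationSubring.closure_le_map_residue
    (InCone.mul_self_mem_subsemiring (P := Sr)) (fun x hx => by
      obtain ⟨q, c, hq, -, u, hu, hux⟩ := hx
      exact ⟨u, hu ▸ InCone.div_mul_self_mem_subsemiring
        (InCone.subsemigroupClosure_subset_subsemiring hq) c, hux⟩) hC
  have hu_cone : InCone Sr u := hu.resolve_left fun hu0 => by
    simp [show u = 0 from Subtype.ext hu0] at hres
  have h1u : (1 + u : RatFuncField K n) ≠ 0 := fun h =>
    neg_one_not_inCone hS (eq_neg_of_add_eq_zero_right h ▸ hu_cone)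
  have hinv : ((1 + u : wt.valuationSubring) : RatFuncField K n)⁻¹ ∈ wt.valuationSubring :=
    hA _ (Subring.subset_closure (Or.inr ⟨u, hu_cone, by push_cast; rfl⟩))
  refine wt.valuationSubring.residue_ne_zero_of_inv_mem (by push_cast; exact h1u) hinv ?_
  rw [map_add, map_one, hres, add_neg_cancel]

/-- If `ν̃` extends `ν` with `A_p̄ ⊆ O_ν̃`, then the residue field
carries an ordering in which every `res(q/c²)` (for `q` in the multiplicative
semigroup generated by the `p_i` and `ν̃ q = ν̃ (c²)`) is nonnegative. -/
theorem exists_residue_ordering {K : Type u} [Field K] [LinearOrder K] [IsStrictOrderedRing K] {Γ₀ : Type v}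
    [LinearOrderedCommGroupWithZero Γ₀] (ν : Valuation K Γ₀) (hK : IsRCVF ν)
    {n m : ℕ} (p : Fin m → MvPolynomial (Fin n) K) (hS : (SetSP p).Nonempty)
    {Γ : Type w} [LinearOrderedCommGroupWithZero Γ]
    (wt : Valuation (RatFuncField K n) Γ) (hext : ValExtends ν wt)
    (hA : ∀ x ∈ OAlgebraGen ν (SetIP p), wt x ≤ 1) :
    ∃ Oℓ : FieldOrdering (IsLocalRing.ResidueField wt.valuationSubring),
      ∀ x : IsLocalRing.ResidueField wt.valuationSubring,
        (∃ q c : RatFuncField K n,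
          q ∈ Subsemigroup.closure
            (Set.range fun i =>
              algebraMap (MvPolynomial (Fin n) K) (RatFuncField K n) (p i)) ∧
          wt q = wt (c * c) ∧
          ∃ u : wt.valuationSubring, (u : RatFuncField K n) = q / (c * c) ∧
            IsLocalRing.residue wt.valuationSubring u = x) →
        x ∈ Oℓ.P :=
  exists_residue_ordering_general ν p hS wt hA
end
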